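/- arXiv:2502.01425 — 8 statements merged into one kernel-verified Lean document; each statement's English description precedes it below -/
import Mathlib

section
/- For every x > 1, the function W̄(x) = -W₋₁(-e^{-x}), where W₋₁ is the negative branch of the Lambert W function, satisfies x + ln x ≤ W̄(x) ≤ x + ln x + 1/2 ≤ 2x. -/
/-- For `x > 1`, the value `w = W̄(x)`, characterized as the unique solution `w ≥ 1` of
`w - ln w = x` (equivalently `W̄(x) = -W₋₁(-e^{-x})`), satisfies
`x + ln x ≤ W̄(x) ≤ x + ln x + 1/2 ≤ 2x`. -/
theorem stmt_1 (x w : ℝ) (hx : 1 < x) (hw : 1 ≤ w) (hwx : w - Real.log w = x) :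
    x + Real.log x ≤ w ∧ w ≤ x + Real.log x + 1 / 2 ∧ x + Real.log x + 1 / 2 ≤ 2 * x := by
  have hx0 : (0:ℝ) < x := by linarith
  have hw0 : (0:ℝ) < w := by linarith
  have hlw0 : 0 ≤ Real.log w := Real.log_nonneg hw
  have hxw : x ≤ w := by linarith
  have he : (2.7182818283 : ℝ) < Real.exp 1 := Real.exp_one_gt_d9
  have hepos : (0:ℝ) < Real.exp 1 := Real.exp_pos 1
  have heE : (0:ℝ) < Real.exp 1 - 1 := by linarith
  -- log w ≤ w / e
  have hlogw : Real.log w ≤ w / Real.exp 1 := by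
    have h := Real.log_le_sub_one_of_pos (show (0:ℝ) < w / Real.exp 1 from div_pos hw0 hepos)
    rw [Real.log_div (ne_of_gt hw0) (Real.exp_ne_zero 1), Real.log_exp] at h
    linarith
  -- hence w ≤ x * e / (e - 1)
  have hwc : w ≤ x * Real.exp 1 / (Real.exp 1 - 1) := by
    rw [le_div_iff₀ heE]
    have h1 : w - x ≤ w / Real.exp 1 := by linarith
    have h2 : (w - x) * Real.exp 1 ≤ (w / Real.exp 1) * Real.exp 1 :=
      mul_le_mul_of_nonneg_right h1 (le_of_lt hepos)
    rw [div_mul_cancel₀ _ (ne_of_gt hepos)] at h2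
    nlinarith
  -- exp (1/2) ≤ e - 1
  have hsq : Real.exp (1/2) * Real.exp (1/2) = Real.exp 1 := by
    rw [← Real.exp_add]; norm_num
  have hs0 : (0:ℝ) < Real.exp (1/2) := Real.exp_pos _
  have hse : Real.exp (1/2) ≤ Real.exp 1 - 1 := by
    nlinarith [sq_nonneg (2 * Real.exp (1/2) - 33/10)]
  -- log (e/(e-1)) ≤ 1/2, i.e. 1 - log (e-1) ≤ 1/2
  have hlogE : (1:ℝ)/2 ≤ Real.log (Real.exp 1 - 1) := by
    rw [Real.le_log_iff_exp_le heE]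
    exact hse
  -- log w ≤ log x + 1/2
  have hlogw2 : Real.log w ≤ Real.log x + 1/2 := by
    have h1 : Real.log w ≤ Real.log (x * Real.exp 1 / (Real.exp 1 - 1)) :=
      Real.log_le_log hw0 hwc
    rw [Real.log_div (by positivity) (ne_of_gt heE),
        Real.log_mul (ne_of_gt hx0) (Real.exp_ne_zero 1), Real.log_exp] at h1
    linarith
  have hlx : Real.log x ≤ x - 1 := Real.log_le_sub_one_of_pos hx0
  refine ⟨?_, ?_, ?_⟩
  · have : Real.log x ≤ Real.log w := Real.log_le_log hx0 hxw
    linarith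
  · linarith
  · linarith
end

section
/- With notation as in the Gaussian mixture identity, let η_max = max_k σ_k²/N_{t,k} and η_min = min_k σ_k²/N_{t,k}. Then ½ Σ_{k=1}^K S_{t,k}²/N_{t,k} ≤ (1 + η_max)·( ln E_{λ∼ρ}[exp(Σ_k (λ_k S_{t,k} - N_{t,k} λ_k²/2))] + (K/2) ln(1 + η_min^{-1}) ). -/
/-!
Under `ρ` the expectation factorizes into one-dimensional Gaussian integrals; completing the square
gives `ln E = Σ_k (S_k² / (2 (N_k + σ_k²)) - ½ ln (1 + N_k / σ_k²))`. Writing `η_k = σ_k² / N_k`,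
each term of the left-hand side is `S_k² / (2 N_k) = (1 + η_k) · S_k² / (2 (N_k + σ_k²))`, and
`N_k / σ_k² = η_k⁻¹ ≤ η_min⁻¹` bounds the logarithms.
-/

open MeasureTheory ProbabilityTheory Real Finset
open scoped NNReal

lemma integral_exp_neg_mul_sq_add_mul {b : ℝ} (hb : 0 < b) (c : ℝ) :
    ∫ x : ℝ, exp (-b * x ^ 2 + c * x) = √(π / b) * exp (c ^ 2 / (4 * b)) := by
  have complete_sq : ∀ x : ℝ,
      -b * x ^ 2 + c * x = -b * (x - c / (2 * b)) ^ 2 + c ^ 2 / (4 * b) := by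
    intro x; field_simp; ring
  simp_rw [complete_sq, exp_add]
  rw [integral_mul_const, integral_sub_right_eq_self (fun x => exp (-b * x ^ 2)), integral_gaussian]

lemma integral_exp_mul_sub_mul_sq_gaussianReal {v : ℝ≥0} (hv : v ≠ 0) (s : ℝ) {n : ℝ}
    (hn : 0 < 1 + n * v) :
    ∫ x, exp (x * s - n * x ^ 2 / 2) ∂gaussianReal 0 v
      = exp (s ^ 2 * v / (2 * (1 + n * v))) / √(1 + n * v) := by
  have hv₀ : (0 : ℝ) < v := by positivity
  have hb : 0 < (1 + n * v) / (2 * v) := by positivity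
  have integrand : ∀ x : ℝ, gaussianPDFReal 0 v x • exp (x * s - n * x ^ 2 / 2)
      = (√(2 * π * v))⁻¹ * exp (-((1 + n * v) / (2 * v)) * x ^ 2 + s * x) := by
    intro x
    rw [gaussianPDFReal_def, smul_eq_mul, mul_assoc, ← exp_add]
    congr 2
    field_simp
    ring
  rw [integral_gaussianReal_eq_integral_smul hv]
  simp_rw [integrand]
  rw [integral_const_mul, integral_exp_neg_mul_sq_add_mul hb, ← mul_assoc,
    div_eq_inv_mul (exp _)]
  congr 1
  · rw [← sqrt_inv, ← sqrt_inv, ← sqrt_mul (by positivity)]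
    congr 1
    field_simp
  · congr 1
    field_simp
    ring

lemma integral_exp_sum_pi_gaussianReal {ι : Type*} [Fintype ι] (s n : ι → ℝ) {v : ι → ℝ≥0}
    (hv : ∀ k, v k ≠ 0) (hn : ∀ k, 0 < 1 + n k * v k) :
    ∫ l : ι → ℝ, exp (∑ k, (l k * s k - n k * l k ^ 2 / 2))
        ∂Measure.pi (fun k => gaussianReal 0 (v k))
      = ∏ k, exp (s k ^ 2 * v k / (2 * (1 + n k * v k))) / √(1 + n k * v k) := by
  simp_rw [exp_sum]
  rw [integral_fintype_prod_eq_prod (fun k x => exp (x * s k - n k * x ^ 2 / 2))]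
  exact prod_congr rfl fun k _ => integral_exp_mul_sub_mul_sq_gaussianReal (hv k) (s k) (hn k)

lemma log_integral_exp_sum_pi_gaussianReal {ι : Type*} [Fintype ι] (s n : ι → ℝ) {v : ι → ℝ≥0}
    (hv : ∀ k, v k ≠ 0) (hn : ∀ k, 0 < 1 + n k * v k) :
    log (∫ l : ι → ℝ, exp (∑ k, (l k * s k - n k * l k ^ 2 / 2))
        ∂Measure.pi (fun k => gaussianReal 0 (v k)))
      = ∑ k, (s k ^ 2 * v k / (2 * (1 + n k * v k)) - log (1 + n k * v k) / 2) := by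
  have hsqrt : ∀ k, √(1 + n k * v k) ≠ 0 := fun k => (sqrt_pos.2 (hn k)).ne'
  rw [integral_exp_sum_pi_gaussianReal s n hv hn,
    log_prod fun k _ => div_ne_zero (exp_ne_zero _) (hsqrt k)]
  refine sum_congr rfl fun k _ => ?_
  rw [log_div (exp_ne_zero _) (hsqrt k), log_exp, log_sqrt (hn k).le]

lemma log_one_add_inv_le_log_one_add_inv_iInf {ι : Type*} [Finite ι] {η : ι → ℝ}
    (hη : ∀ k, 0 < η k) (k : ι) : log (1 + (η k)⁻¹) ≤ log (1 + (⨅ j, η j)⁻¹) := by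
  have : Nonempty ι := ⟨k⟩
  obtain ⟨k₀, hk₀⟩ := exists_eq_ciInf_of_finite (f := η)
  have := hη k₀
  have := hη k
  rw [← hk₀]
  gcongr
  exact hk₀ ▸ ciInf_le (Set.finite_range η).bddBelow k

lemma sum_one_add_mul_le_one_add_iSup_mul {ι : Type*} [Fintype ι] {η a : ι → ℝ}
    (hη : ∀ k, 0 < η k) (ha : ∀ k, 0 ≤ a k) :
    ∑ k, (1 + η k) * a k ≤ (1 + ⨆ k, η k) *
      (∑ k, (a k - log (1 + (η k)⁻¹) / 2) + Fintype.card ι / 2 * log (1 + (⨅ k, η k)⁻¹)) := by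
  have hlog : ∑ k, log (1 + (η k)⁻¹) / 2 ≤ Fintype.card ι / 2 * log (1 + (⨅ k, η k)⁻¹) := by
    calc ∑ k, log (1 + (η k)⁻¹) / 2 ≤ ∑ _k : ι, log (1 + (⨅ k, η k)⁻¹) / 2 := by
          refine sum_le_sum fun k _ => ?_
          gcongr ?_ / _
          exact log_one_add_inv_le_log_one_add_inv_iInf hη k
      _ = _ := by rw [sum_const, card_univ, nsmul_eq_mul]; ring
  have hsup : 0 ≤ ⨆ k, η k := Real.iSup_nonneg fun k => (hη k).le
  calc ∑ k, (1 + η k) * a k ≤ ∑ k, (1 + ⨆ j, η j) * a k := by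
        gcongr with k
        · exact ha k
        · exact le_ciSup (Set.finite_range η).bddAbove k
    _ = (1 + ⨆ j, η j) * ∑ k, a k := (mul_sum _ _ _).symm
    _ ≤ _ := by
        rw [sum_sub_distrib]
        gcongr
        linarith

theorem stmt_5_general (K : ℕ) (S N σ : Fin K → ℝ)
    (hN : ∀ k, 0 < N k) (hσ : ∀ k, 0 < σ k) :
    (1 / 2) * ∑ k, (S k) ^ 2 / N k ≤
      (1 + ⨆ k, (σ k) ^ 2 / N k) *
        (Real.log (∫ l : Fin K → ℝ,
            Real.exp (∑ k, (l k * S k - N k * (l k) ^ 2 / 2))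
            ∂(Measure.pi fun k => gaussianReal 0 (Real.toNNReal ((σ k)⁻¹ ^ 2)))) +
          ((K : ℝ) / 2) * Real.log (1 + (⨅ k, (σ k) ^ 2 / N k)⁻¹)) := by
  set η : Fin K → ℝ := fun k => σ k ^ 2 / N k
  have hη : ∀ k, 0 < η k := fun k => div_pos (pow_pos (hσ k) 2) (hN k)
  have hvar : ∀ k, (((σ k)⁻¹ ^ 2).toNNReal : ℝ) = (σ k)⁻¹ ^ 2 :=
    fun k => Real.coe_toNNReal _ (sq_nonneg _)
  have hprec : ∀ k, N k * (σ k)⁻¹ ^ 2 = (η k)⁻¹ := fun k => by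
    simp only [η]; rw [inv_div, div_eq_mul_inv, inv_pow]
  rw [log_integral_exp_sum_pi_gaussianReal S N (fun k => by simpa using (hσ k).ne')
    (fun k => by rw [hvar, hprec]; have := hη k; positivity)]
  simp only [hvar, hprec]
  calc 1 / 2 * ∑ k, S k ^ 2 / N k
      = ∑ k, (1 + η k) * (S k ^ 2 * (σ k)⁻¹ ^ 2 / (2 * (1 + (η k)⁻¹))) := by
        refine (mul_sum _ _ _).trans (sum_congr rfl fun k _ => ?_)
        have := hN k; have := hσ k
        simp only [η]
        field_simp
        ring
    _ ≤ _ := by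
        have ha : ∀ k, 0 ≤ S k ^ 2 * (σ k)⁻¹ ^ 2 / (2 * (1 + (η k)⁻¹)) := fun k => by
          have := hη k; positivity
        simpa only [Fintype.card_fin] using sum_one_add_mul_le_one_add_iSup_mul hη ha

/-- With `ρ = ⊗_k N(0, σ_k^{-2})`, `η_max = max_k σ_k²/N_k`, `η_min = min_k σ_k²/N_k`,
`½ Σ_k S_k²/N_k ≤ (1 + η_max)(ln E_{λ∼ρ}[exp(Σ_k (λ_k S_k - N_k λ_k²/2))]
  + (K/2) ln(1 + η_min⁻¹))`. -/
theorem stmt_5 (K : ℕ) [NeZero K] (S N σ : Fin K → ℝ)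
    (hN : ∀ k, 0 < N k) (hσ : ∀ k, 0 < σ k) :
    (1 / 2) * ∑ k, (S k) ^ 2 / N k ≤
      (1 + ⨆ k, (σ k) ^ 2 / N k) *
        (Real.log (∫ l : Fin K → ℝ,
            Real.exp (∑ k, (l k * S k - N k * (l k) ^ 2 / 2))
            ∂(Measure.pi fun k => gaussianReal 0 (Real.toNNReal ((σ k)⁻¹ ^ 2)))) +
          ((K : ℝ) / 2) * Real.log (1 + (⨅ k, (σ k) ^ 2 / N k)⁻¹)) :=
  stmt_5_general K S N σ hN hσ
end

section
/- For K-armed Gaussian bandit instances with variance σ² and a pure exploration problem, for any two mean vectors μ and μ', one has √(T*(μ)^{-1}) - √(T*(μ')^{-1}) ≤ (1/√(2σ²))·‖μ - μ'‖_∞, where T*(μ)^{-1} = sup_{w ∈ Δ_K} inf_{λ ∈ Alt_μ} Σ_i w_i (μ_i - λ_i)²/(2σ²). -/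
/-- `Tinv K σ2 Alt μ = (T*(μ))⁻¹ = sup_{w ∈ Δ_K} inf_{λ ∈ Alt μ} Σ_i w_i (μ_i - λ_i)²/(2σ²)`. -/
noncomputable def Tinv (K : ℕ) (σ2 : ℝ) (Alt : (Fin K → ℝ) → Set (Fin K → ℝ))
    (μ : Fin K → ℝ) : ℝ :=
  sSup {x | ∃ w ∈ stdSimplex ℝ (Fin K), x =
    sInf {y | ∃ l ∈ Alt μ, y = ∑ i, w i * (μ i - l i) ^ 2 / (2 * σ2)}}

/-! After a square root, the inner infimum becomes `inf_{λ ∈ Alt μ} ‖μ - λ‖_w / √(2σ²)`, which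
moves by at most `‖μ - μ'‖_w / √(2σ²) ≤ ‖μ - μ'‖_∞ / √(2σ²)` when `μ` is replaced by `μ'` and `λ`
ranges over the same set, by the triangle inequality for `‖·‖_w`; the square root commutes with
the supremum over `w`. If `Alt μ ≠ Alt μ'`, then `μ' ∈ Alt μ` and taking `λ = μ'` bounds
`√(T*(μ)⁻¹)` by `‖μ - μ'‖_∞ / √(2σ²)` directly. -/

open Finset

lemma csInf_image_le_csInf_image_add {α : Type*} {f g : α → ℝ} {A : Set α} {c : ℝ}
    (hf : BddBelow (f '' A)) (hA : A.Nonempty) (h : ∀ a ∈ A, f a ≤ g a + c) :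
    sInf (f '' A) ≤ sInf (g '' A) + c := by
  rw [← sub_le_iff_le_add]
  refine le_csInf (hA.image g) ?_
  rintro _ ⟨a, ha, rfl⟩
  linarith [csInf_le hf (Set.mem_image_of_mem f ha), h a ha]

lemma Real.sqrt_sSup_le {X : Set ℝ} {b : ℝ} (hb : 0 ≤ b) (h : ∀ x ∈ X, √x ≤ b) :
    √(sSup X) ≤ b :=
  (Real.sqrt_le_left hb).2 <|
    Real.sSup_le (fun x hx => (Real.sqrt_le_iff.1 (h x hx)).2) (sq_nonneg b)

section WeightedNorm

variable {ι : Type*} [Fintype ι]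

noncomputable def weightedNorm (w x : ι → ℝ) : ℝ := √(∑ i, w i * x i ^ 2)

lemma weightedNorm_eq_norm_toLp {w : ι → ℝ} (hw : 0 ≤ w) (x : ι → ℝ) :
    weightedNorm w x = ‖WithLp.toLp 2 (fun i => √(w i) * x i)‖ := by
  simp [weightedNorm, EuclideanSpace.norm_eq, mul_pow, Real.sq_sqrt (hw _)]

lemma weightedNorm_add_le {w : ι → ℝ} (hw : 0 ≤ w) (x y : ι → ℝ) :
    weightedNorm w (x + y) ≤ weightedNorm w x + weightedNorm w y := by
  simp only [weightedNorm_eq_norm_toLp hw, Pi.add_apply, mul_add]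
  exact norm_add_le (WithLp.toLp 2 fun i => √(w i) * x i) (WithLp.toLp 2 fun i => √(w i) * y i)

lemma weightedNorm_le_norm {w : ι → ℝ} (hw : w ∈ stdSimplex ℝ ι) (x : ι → ℝ) :
    weightedNorm w x ≤ ‖x‖ := by
  refine Real.sqrt_le_iff.2 ⟨norm_nonneg x, ?_⟩
  calc ∑ i, w i * x i ^ 2 ≤ ∑ i, w i * ‖x‖ ^ 2 := by
        refine sum_le_sum fun i _ => mul_le_mul_of_nonneg_left ?_ (hw.1 i)
        simpa only [Real.norm_eq_abs, sq_abs] using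
          pow_le_pow_left₀ (norm_nonneg _) (norm_le_pi_norm x i) 2
    _ = ‖x‖ ^ 2 := by rw [← sum_mul, hw.2, one_mul]

end WeightedNorm

section WeightedKL

variable {ι : Type*} [Fintype ι]

noncomputable def weightedKL (σ2 : ℝ) (w μ l : ι → ℝ) : ℝ :=
  ∑ i, w i * (μ i - l i) ^ 2 / (2 * σ2)

noncomputable def infWeightedKL (σ2 : ℝ) (A : Set (ι → ℝ)) (w μ : ι → ℝ) : ℝ :=
  sInf (weightedKL σ2 w μ '' A)

variable {σ2 : ℝ} {w : ι → ℝ}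

lemma weightedKL_nonneg (hσ2 : 0 ≤ σ2) (hw : 0 ≤ w) (μ l : ι → ℝ) : 0 ≤ weightedKL σ2 w μ l :=
  sum_nonneg fun i _ => div_nonneg (mul_nonneg (hw i) (sq_nonneg _)) (by positivity)

lemma sqrt_weightedKL (hσ2 : 0 ≤ σ2) (w μ l : ι → ℝ) :
    √(weightedKL σ2 w μ l) = weightedNorm w (μ - l) / √(2 * σ2) := by
  rw [weightedKL, ← sum_div, Real.sqrt_div' _ (by positivity)]
  rfl

lemma sqrt_weightedKL_le (hσ2 : 0 ≤ σ2) (hw : w ∈ stdSimplex ℝ ι) (μ l : ι → ℝ) :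
    √(weightedKL σ2 w μ l) ≤ ‖μ - l‖ / √(2 * σ2) := by
  rw [sqrt_weightedKL hσ2]
  exact div_le_div_of_nonneg_right (weightedNorm_le_norm hw _) (Real.sqrt_nonneg _)

lemma sqrt_weightedKL_le_add (hσ2 : 0 ≤ σ2) (hw : w ∈ stdSimplex ℝ ι) (μ μ' l : ι → ℝ) :
    √(weightedKL σ2 w μ l) ≤ √(weightedKL σ2 w μ' l) + ‖μ - μ'‖ / √(2 * σ2) := by
  simp only [sqrt_weightedKL hσ2, ← add_div]
  refine div_le_div_of_nonneg_right ?_ (Real.sqrt_nonneg _)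
  calc weightedNorm w (μ - l) = weightedNorm w ((μ - μ') + (μ' - l)) := by
        rw [sub_add_sub_cancel]
    _ ≤ weightedNorm w (μ - μ') + weightedNorm w (μ' - l) := weightedNorm_add_le hw.1 _ _
    _ ≤ weightedNorm w (μ' - l) + ‖μ - μ'‖ := by linarith [weightedNorm_le_norm hw (μ - μ')]

variable {A : Set (ι → ℝ)}

lemma sqrt_infWeightedKL (hσ2 : 0 ≤ σ2) (hw : 0 ≤ w) (hA : A.Nonempty) (μ : ι → ℝ) :
    √(infWeightedKL σ2 A w μ) = sInf ((fun l => √(weightedKL σ2 w μ l)) '' A) := by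
  rw [infWeightedKL, ← Set.image_image Real.sqrt]
  exact Monotone.map_csInf_of_continuousAt Real.continuous_sqrt.continuousAt
    (fun _ _ h => Real.sqrt_le_sqrt h) (hA.image _)
    ⟨0, Set.forall_mem_image.2 fun l _ => weightedKL_nonneg hσ2 hw μ l⟩

lemma sqrt_infWeightedKL_le_add (hσ2 : 0 ≤ σ2) (hw : w ∈ stdSimplex ℝ ι) (hA : A.Nonempty)
    (μ μ' : ι → ℝ) :
    √(infWeightedKL σ2 A w μ) ≤ √(infWeightedKL σ2 A w μ') + ‖μ - μ'‖ / √(2 * σ2) := by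
  rw [sqrt_infWeightedKL hσ2 hw.1 hA, sqrt_infWeightedKL hσ2 hw.1 hA]
  exact csInf_image_le_csInf_image_add
    ⟨0, Set.forall_mem_image.2 fun l _ => Real.sqrt_nonneg _⟩ hA
    fun l _ => sqrt_weightedKL_le_add hσ2 hw μ μ' l

lemma sqrt_infWeightedKL_le_of_mem (hσ2 : 0 ≤ σ2) (hw : w ∈ stdSimplex ℝ ι) {l : ι → ℝ}
    (hl : l ∈ A) (μ : ι → ℝ) :
    √(infWeightedKL σ2 A w μ) ≤ ‖μ - l‖ / √(2 * σ2) := by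
  rw [sqrt_infWeightedKL hσ2 hw.1 ⟨l, hl⟩]
  exact (csInf_le ⟨0, Set.forall_mem_image.2 fun l _ => Real.sqrt_nonneg _⟩
    (Set.mem_image_of_mem _ hl)).trans (sqrt_weightedKL_le hσ2 hw μ l)

end WeightedKL

section Tinv

variable {K : ℕ} {σ2 : ℝ} {Alt : (Fin K → ℝ) → Set (Fin K → ℝ)} {μ : Fin K → ℝ}

lemma Tinv_eq_sSup_infWeightedKL : Tinv K σ2 Alt μ =
    sSup {x | ∃ w ∈ stdSimplex ℝ (Fin K), x = infWeightedKL σ2 (Alt μ) w μ} := by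
  simp only [Tinv, infWeightedKL, weightedKL, Set.image, eq_comm (a := ∑ i, _)]

lemma sqrt_Tinv_le {b : ℝ} (hb : 0 ≤ b)
    (h : ∀ w ∈ stdSimplex ℝ (Fin K), √(infWeightedKL σ2 (Alt μ) w μ) ≤ b) :
    √(Tinv K σ2 Alt μ) ≤ b := by
  rw [Tinv_eq_sSup_infWeightedKL]
  exact Real.sqrt_sSup_le hb (by rintro _ ⟨w, hw, rfl⟩; exact h w hw)

lemma sqrt_infWeightedKL_le_sqrt_Tinv (hσ2 : 0 ≤ σ2) (hA : (Alt μ).Nonempty) {w : Fin K → ℝ}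
    (hw : w ∈ stdSimplex ℝ (Fin K)) :
    √(infWeightedKL σ2 (Alt μ) w μ) ≤ √(Tinv K σ2 Alt μ) := by
  obtain ⟨l, hl⟩ := hA
  rw [Tinv_eq_sSup_infWeightedKL]
  refine Real.sqrt_le_sqrt (le_csSup ⟨(‖μ - l‖ / √(2 * σ2)) ^ 2, ?_⟩ ⟨w, hw, rfl⟩)
  rintro _ ⟨v, hv, rfl⟩
  exact (Real.sqrt_le_iff.1 (sqrt_infWeightedKL_le_of_mem hσ2 hv hl μ)).2

end Tinv

theorem stmt_6_general (K : ℕ) (σ2 : ℝ) (hσ2 : 0 < σ2)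
    (Alt : (Fin K → ℝ) → Set (Fin K → ℝ))
    (hAlt : ∀ μ μ' : Fin K → ℝ, Alt μ = Alt μ' ∨ μ' ∈ Alt μ)
    (μ μ' : Fin K → ℝ) (h2 : (Alt μ').Nonempty) :
    Real.sqrt (Tinv K σ2 Alt μ) - Real.sqrt (Tinv K σ2 Alt μ') ≤
      (1 / Real.sqrt (2 * σ2)) * ‖μ - μ'‖ := by
  rw [one_div_mul_eq_div, sub_le_iff_le_add']
  refine sqrt_Tinv_le (by positivity) fun w hw => ?_
  rcases hAlt μ μ' with hEq | hmem
  · rw [hEq]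
    calc √(infWeightedKL σ2 (Alt μ') w μ)
        ≤ √(infWeightedKL σ2 (Alt μ') w μ') + ‖μ - μ'‖ / √(2 * σ2) :=
          sqrt_infWeightedKL_le_add hσ2.le hw h2 μ μ'
      _ ≤ √(Tinv K σ2 Alt μ') + ‖μ - μ'‖ / √(2 * σ2) :=
          add_le_add_left (sqrt_infWeightedKL_le_sqrt_Tinv hσ2.le h2 hw) _
  · exact (sqrt_infWeightedKL_le_of_mem hσ2.le hw hmem μ).trans
      (le_add_of_nonneg_left (Real.sqrt_nonneg _))

/-- `√(T*(μ)⁻¹) - √(T*(μ')⁻¹) ≤ ‖μ - μ'‖_∞ / √(2σ²)`, for any alternative structure `Alt`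
such that for all `μ, μ'` either `Alt μ = Alt μ'` or `μ' ∈ Alt μ`. (`‖·‖` on `Fin K → ℝ`
is the sup norm.) -/
theorem stmt_6 (K : ℕ) (σ2 : ℝ) (hσ2 : 0 < σ2)
    (Alt : (Fin K → ℝ) → Set (Fin K → ℝ))
    (hAlt : ∀ μ μ' : Fin K → ℝ, Alt μ = Alt μ' ∨ μ' ∈ Alt μ)
    (μ μ' : Fin K → ℝ) (h1 : (Alt μ).Nonempty) (h2 : (Alt μ').Nonempty) :
    Real.sqrt (Tinv K σ2 Alt μ) - Real.sqrt (Tinv K σ2 Alt μ') ≤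
      (1 / Real.sqrt (2 * σ2)) * ‖μ - μ'‖ :=
  stmt_6_general K σ2 hσ2 Alt hAlt μ μ' h2
end

section
/- In the top-k problem (arms ordered so μ_1 ≥ … ≥ μ_K with μ_k > μ_{k+1}), for any w in the simplex Δ_K, inf_{λ ∈ Alt_μ} Σ_{i∈[K]} w_i (μ_i - λ_i)²/(2σ²) = min_{a ≤ k, b ≥ k+1} [ w_a (μ_a - μ_{ab})²/(2σ²) + w_b (μ_b - μ_{ab})²/(2σ²) ], where μ_{ab} = (w_a μ_a + w_b μ_b)/(w_a + w_b). -/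
/-- The set of the (at most) `k` largest coordinates of `ν`: arms with fewer than `k`
arms strictly above them. -/
def topSet (K k : ℕ) (ν : Fin K → ℝ) : Set (Fin K) :=
  {i | ({j | ν i < ν j} : Set (Fin K)).ncard < k}

/-- Alternatives for the top-`k` problem: vectors whose top-`k` set differs. -/
def AltTopK (K k : ℕ) (μ : Fin K → ℝ) : Set (Fin K → ℝ) :=
  {l | topSet K k l ≠ topSet K k μ}

/-!
A vector `l` is an alternative exactly when some top arm `a < k` and some bottom arm `b ≥ k`
satisfy `l a ≤ l b`: ties at the boundary also change the top set, since both tied arms then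
have fewer than `k` arms strictly above them. Hence every alternative costs at least the cost
of its pair `(a, b)` alone, and the least cost of a pair with `l a ≤ l b` is attained by moving
both coordinates to their weighted mean `μ_ab`; conversely, moving `μ_a` and `μ_b` to `μ_ab`
is itself an alternative, so the two infima agree and are both attained.
-/

open Function

lemma ncard_setOf_val_lt {K k : ℕ} (hkK : k ≤ K) : {i : Fin K | (i : ℕ) < k}.ncard = k := by
  rw [← Finset.coe_filter_univ, Set.ncard_coe_finset, Fin.card_filter_val_lt, min_eq_right hkK]

lemma topSet_eq_iff {K k : ℕ} {T : Set (Fin K)} (hT : T.ncard = k) (ν : Fin K → ℝ) :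
    topSet K k ν = T ↔ ∀ a ∈ T, ∀ b ∉ T, ν b < ν a := by
  constructor
  · rintro rfl a ha b hb
    by_contra! hab
    have : {j | ν b < ν j}.ncard ≤ {j | ν a < ν j}.ncard :=
      Set.ncard_le_ncard fun j hj => hab.trans_lt hj
    simp only [topSet, Set.mem_ofPred_eq, not_lt] at ha hb
    omega
  · intro hsep
    ext i
    simp only [topSet, Set.mem_ofPred_eq]
    by_cases hi : i ∈ T
    · have hsub : {j | ν i < ν j} ⊆ T \ {i} := fun j (hj : ν i < ν j) =>
        ⟨by_contra fun hjT => (hsep i hi j hjT).not_gt hj, fun hji : j = i => hj.ne (hji ▸ rfl)⟩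
      have hpos : 0 < T.ncard := (Set.ncard_pos).2 ⟨i, hi⟩
      have := Set.ncard_le_ncard hsub
      rw [Set.ncard_sdiff_singleton_of_mem hi] at this
      simp only [hi, iff_true]
      omega
    · have hsub : T ⊆ {j | ν i < ν j} := fun j hj => hsep j hj i hi
      have := Set.ncard_le_ncard hsub
      simp only [hi, iff_false, not_lt]
      omega

lemma topSet_eq_of_antitone {K k : ℕ} (hkK : k < K) {μ : Fin K → ℝ} (hμ : Antitone μ)
    (hgap : μ ⟨k, hkK⟩ < μ ⟨k - 1, Nat.sub_lt_of_lt hkK⟩) :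
    topSet K k μ = {i : Fin K | (i : ℕ) < k} := by
  refine (topSet_eq_iff (ncard_setOf_val_lt hkK.le) μ).2 fun a ha b hb => ?_
  simp only [Set.mem_ofPred_eq, not_lt] at ha hb
  calc μ b ≤ μ ⟨k, hkK⟩ := hμ (Fin.le_def.2 hb)
    _ < μ ⟨k - 1, _⟩ := hgap
    _ ≤ μ a := hμ (Fin.le_def.2 (by simp only; omega))

lemma mem_altTopK_iff {K k : ℕ} (hkK : k ≤ K) {μ : Fin K → ℝ}
    (hμ : topSet K k μ = {i : Fin K | (i : ℕ) < k}) (l : Fin K → ℝ) :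
    l ∈ AltTopK K k μ ↔ ∃ a b : Fin K, (a : ℕ) < k ∧ k ≤ (b : ℕ) ∧ l a ≤ l b := by
  simp only [AltTopK, Set.mem_ofPred_eq, hμ, ne_eq, topSet_eq_iff (ncard_setOf_val_lt hkK)]
  push Not
  simp only [exists_and_left]

lemma weighted_sq_merge_le {wa wb ma mb x y : ℝ} (hwa : 0 ≤ wa) (hwb : 0 ≤ wb)
    (hm : mb ≤ ma) (hxy : x ≤ y) :
    wa * (ma - (wa * ma + wb * mb) / (wa + wb)) ^ 2
      + wb * (mb - (wa * ma + wb * mb) / (wa + wb)) ^ 2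
      ≤ wa * (ma - x) ^ 2 + wb * (mb - y) ^ 2 := by
  rcases (add_nonneg hwa hwb).eq_or_lt with h | h
  · obtain ⟨rfl, rfl⟩ : wa = 0 ∧ wb = 0 := ⟨by linarith, by linarith⟩
    simp
  have merged : (wa + wb) * (wa * (ma - (wa * ma + wb * mb) / (wa + wb)) ^ 2
      + wb * (mb - (wa * ma + wb * mb) / (wa + wb)) ^ 2) = wa * wb * (ma - mb) ^ 2 := by
    field_simp
    ring
  have lagrange : (wa + wb) * (wa * (ma - x) ^ 2 + wb * (mb - y) ^ 2)
      = (wa * (ma - x) + wb * (mb - y)) ^ 2 + wa * wb * ((ma - x) - (mb - y)) ^ 2 := by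
    ring
  have gap : (ma - mb) ^ 2 ≤ ((ma - x) - (mb - y)) ^ 2 :=
    pow_le_pow_left₀ (sub_nonneg.2 hm) (by linarith) 2
  refine le_of_mul_le_mul_left ?_ h
  rw [merged, lagrange]
  nlinarith [mul_le_mul_of_nonneg_left gap (mul_nonneg hwa hwb),
    sq_nonneg (wa * (ma - x) + wb * (mb - y))]

lemma sum_mul_sq_sub_update_update {ι : Type*} [Fintype ι] [DecidableEq ι] (w μ : ι → ℝ)
    (c : ℝ) {a b : ι} (hab : a ≠ b) (x y : ℝ) :
    ∑ i, w i * (μ i - update (update μ a x) b y i) ^ 2 / c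
      = w a * (μ a - x) ^ 2 / c + w b * (μ b - y) ^ 2 / c := by
  rw [Fintype.sum_eq_add a b hab fun i ⟨hia, hib⟩ => by simp [hia, hib]]
  simp [hab]

/-- Closed form of the inner infimum in top-`k`: for ordered means with a gap at `k`,
`inf_{λ ∈ Alt_μ} Σ_i w_i (μ_i - λ_i)²/(2σ²)
  = min_{a ≤ k < b} [w_a (μ_a - μ_{ab})²/(2σ²) + w_b (μ_b - μ_{ab})²/(2σ²)]`
with `μ_{ab} = (w_a μ_a + w_b μ_b)/(w_a + w_b)` (arms `0`-indexed: top arms are `a < k`). -/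
theorem stmt_10 (K k : ℕ) (σ2 : ℝ) (hσ2 : 0 < σ2) (hkK : k < K)
    (μ : Fin K → ℝ) (hord : ∀ i j : Fin K, i ≤ j → μ j ≤ μ i)
    (hgap : μ ⟨k, hkK⟩ < μ ⟨k - 1, by omega⟩)
    (w : Fin K → ℝ) (hw : w ∈ stdSimplex ℝ (Fin K)) :
    sInf {y | ∃ l ∈ AltTopK K k μ, y = ∑ i, w i * (μ i - l i) ^ 2 / (2 * σ2)} =
      sInf {y | ∃ a b : Fin K, (a : ℕ) < k ∧ k ≤ (b : ℕ) ∧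
        y = w a * (μ a - (w a * μ a + w b * μ b) / (w a + w b)) ^ 2 / (2 * σ2)
          + w b * (μ b - (w a * μ a + w b * μ b) / (w a + w b)) ^ 2 / (2 * σ2)} := by
  have hc : 0 ≤ 2 * σ2 := by positivity
  have hterm : ∀ i (x : ℝ), 0 ≤ w i * (μ i - x) ^ 2 / (2 * σ2) := fun i _ =>
    div_nonneg (mul_nonneg (hw.1 i) (sq_nonneg _)) hc
  have hAlt := mem_altTopK_iff hkK.le (topSet_eq_of_antitone hkK (fun i j => hord i j) hgap)
  have hne : ∀ a b : Fin K, (a : ℕ) < k → k ≤ (b : ℕ) → a ≠ b := fun a b ha hb =>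
    Fin.ne_of_val_ne (by omega)
  apply csInf_eq_csInf_of_forall_exists_le
  · rintro _ ⟨l, hl, rfl⟩
    obtain ⟨a, b, ha, hb, hlab⟩ := (hAlt l).1 hl
    refine ⟨_, ⟨a, b, ha, hb, rfl⟩, ?_⟩
    calc _ ≤ w a * (μ a - l a) ^ 2 / (2 * σ2) + w b * (μ b - l b) ^ 2 / (2 * σ2) := by
          rw [← add_div, ← add_div]
          exact div_le_div_of_nonneg_right (weighted_sq_merge_le (hw.1 a) (hw.1 b)
            (hord a b (Fin.le_def.2 (by omega))) hlab) hc
      _ ≤ _ := Finset.add_le_sum (fun i _ => hterm i (l i)) (Finset.mem_univ a)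
          (Finset.mem_univ b) (hne a b ha hb)
  · rintro _ ⟨a, b, ha, hb, rfl⟩
    set m := (w a * μ a + w b * μ b) / (w a + w b)
    refine ⟨_, ⟨update (update μ a m) b m, (hAlt _).2 ⟨a, b, ha, hb, ?_⟩, rfl⟩, ?_⟩
    · simp [hne a b ha hb]
    · exact (sum_mul_sq_sub_update_update w μ _ (hne a b ha hb) m m).le
end

section
/- In the thresholding bandit problem with threshold τ and mean vector μ with μ_i ≠ τ for all i, the characteristic time satisfies (T*(μ))^{-1} = sup_{w ∈ Δ_K} min_{i ∈ [K]} w_i (μ_i - τ)²/(2σ²), and this equals ( Σ_i 2σ²/(μ_i - τ)² )^{-1}. -/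
/-!
An alternative must put some arm `i` on the other side of `τ`, which costs at least
`w i (μ i - τ)² / (2σ²)`; moving only arm `i` to `τ`, or arbitrarily close to it, attains this,
so the inner infimum is `min_i w_i (μ_i - τ)² / (2σ²)`. For positive `a i`, the weights
`w i ∝ (a i)⁻¹` equalize all `w i * a i` at `(∑ i, (a i)⁻¹)⁻¹`, and no weight vector does better
because `min_i w_i a_i * ∑ i, (a i)⁻¹ ≤ ∑ i, w i = 1`.
-/

/-- Alternatives for the thresholding problem. -/
def AltTh (K : ℕ) (τ : ℝ) (ν : Fin K → ℝ) : Set (Fin K → ℝ) :=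
  {l | ({i | τ < l i} : Set (Fin K)) ≠ {i | τ < ν i}}

lemma sq_sub_le_sq_sub_of_not_iff {τ a b : ℝ} (h : ¬(τ < a ↔ τ < b)) :
    (b - τ) ^ 2 ≤ (b - a) ^ 2 := by
  by_cases hb : τ < b
  · have ha : a ≤ τ := by simpa [hb] using h
    nlinarith
  · have ha : τ < a := by simpa [hb] using h
    nlinarith

lemma mem_closure_setOf_not_iff (τ b : ℝ) : τ ∈ closure {t : ℝ | ¬(τ < t ↔ τ < b)} := by
  by_cases hb : τ < b
  · exact subset_closure (by simp [hb])
  · simp only [hb, iff_false, not_not]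
    rw [show {t : ℝ | τ < t} = Set.Ioi τ from rfl, closure_Ioi]
    exact Set.self_mem_Ici

section AltTh

variable {K : ℕ} {τ : ℝ} {μ : Fin K → ℝ}

lemma update_mem_altTh {i : Fin K} {t : ℝ} (ht : ¬(τ < t ↔ τ < μ i)) :
    Function.update μ i t ∈ AltTh K τ μ := fun h ↦ ht <| by
  simpa using Set.ext_iff.mp h i

lemma exists_not_iff_of_mem_altTh {l : Fin K → ℝ} (hl : l ∈ AltTh K τ μ) :
    ∃ i, ¬(τ < l i ↔ τ < μ i) := by
  by_contra! h
  exact hl (Set.ext h)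

end AltTh

section Cost

variable {K : ℕ} {τ c : ℝ} {μ w : Fin K → ℝ}

lemma sum_cost_update (i : Fin K) (t : ℝ) :
    ∑ j, w j * (μ j - Function.update μ i t j) ^ 2 / c = w i * (μ i - t) ^ 2 / c := by
  rw [Finset.sum_eq_single i (fun j _ hj ↦ by simp [Function.update_of_ne hj]) (by simp)]
  simp

lemma iInf_le_cost_of_mem_altTh (hc : 0 < c) (hw : ∀ i, 0 ≤ w i) {l : Fin K → ℝ}
    (hl : l ∈ AltTh K τ μ) :
    ⨅ i, w i * (μ i - τ) ^ 2 / c ≤ ∑ i, w i * (μ i - l i) ^ 2 / c := by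
  obtain ⟨i, hi⟩ := exists_not_iff_of_mem_altTh hl
  calc ⨅ i, w i * (μ i - τ) ^ 2 / c
      ≤ w i * (μ i - τ) ^ 2 / c := ciInf_le (Finite.bddBelow_range _) i
    _ ≤ w i * (μ i - l i) ^ 2 / c := by
        have := hw i
        gcongr w i * ?_ / c
        exact sq_sub_le_sq_sub_of_not_iff hi
    _ ≤ ∑ j, w j * (μ j - l j) ^ 2 / c :=
        Finset.single_le_sum (f := fun j ↦ w j * (μ j - l j) ^ 2 / c)
          (fun j _ ↦ by have := hw j; positivity) (Finset.mem_univ i)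

lemma sInf_cost_altTh [NeZero K] (hc : 0 < c) (hw : ∀ i, 0 ≤ w i) :
    sInf {y | ∃ l ∈ AltTh K τ μ, y = ∑ i, w i * (μ i - l i) ^ 2 / c}
      = ⨅ i, w i * (μ i - τ) ^ 2 / c := by
  set S := {y | ∃ l ∈ AltTh K τ μ, y = ∑ i, w i * (μ i - l i) ^ 2 / c}
  have hbdd : BddBelow S := ⟨0, by
    rintro _ ⟨l, -, rfl⟩
    exact Finset.sum_nonneg fun i _ ↦ by have := hw i; positivity⟩
  have hmem : ∀ i t, ¬(τ < t ↔ τ < μ i) → w i * (μ i - t) ^ 2 / c ∈ S := fun i t ht ↦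
    ⟨Function.update μ i t, update_mem_altTh ht, (sum_cost_update i t).symm⟩
  have hle : ∀ i, sInf S ≤ w i * (μ i - τ) ^ 2 / c := fun i ↦
    ContinuousWithinAt.closure_le (mem_closure_setOf_not_iff τ (μ i)) continuousWithinAt_const
      (by fun_prop : Continuous fun t ↦ w i * (μ i - t) ^ 2 / c).continuousWithinAt
      fun t ht ↦ csInf_le hbdd (hmem i t ht)
  have hne : S.Nonempty := by
    obtain ⟨t, ht⟩ := closure_nonempty_iff.mp ⟨τ, mem_closure_setOf_not_iff τ (μ 0)⟩
    exact ⟨_, hmem 0 t ht⟩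
  refine le_antisymm (le_ciInf hle) (le_csInf hne ?_)
  rintro _ ⟨l, hl, rfl⟩
  exact iInf_le_cost_of_mem_altTh hc hw hl

end Cost

section Simplex

variable {ι : Type*} [Fintype ι] {a : ι → ℝ}

lemma iInf_mul_le_inv_sum_inv [Nonempty ι] (ha : ∀ i, 0 < a i) {w : ι → ℝ}
    (hw : w ∈ stdSimplex ℝ ι) : ⨅ i, w i * a i ≤ (∑ i, (a i)⁻¹)⁻¹ := by
  set m := ⨅ i, w i * a i
  have hm : ∀ i, m * (a i)⁻¹ ≤ w i := fun i ↦
    (mul_inv_le_iff₀ (ha i)).mpr (ciInf_le (Finite.bddBelow_range _) i)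
  have hsum : m * ∑ i, (a i)⁻¹ ≤ 1 := by
    rw [Finset.mul_sum, ← hw.2]
    exact Finset.sum_le_sum fun i _ ↦ hm i
  have hpos : 0 < ∑ i, (a i)⁻¹ :=
    Finset.sum_pos (fun i _ ↦ inv_pos.mpr (ha i)) Finset.univ_nonempty
  rwa [← one_div, le_div_iff₀ hpos]

lemma isGreatest_iInf_mul_stdSimplex [Nonempty ι] (ha : ∀ i, 0 < a i) :
    IsGreatest {y | ∃ w ∈ stdSimplex ℝ ι, y = ⨅ i, w i * a i} (∑ i, (a i)⁻¹)⁻¹ := by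
  set S := ∑ i, (a i)⁻¹
  have hS : 0 < S := Finset.sum_pos (fun i _ ↦ inv_pos.mpr (ha i)) Finset.univ_nonempty
  refine ⟨⟨fun i ↦ (a i)⁻¹ / S, ⟨fun i ↦ ?_, ?_⟩, ?_⟩, ?_⟩
  · have := ha i
    positivity
  · rw [← Finset.sum_div, div_self hS.ne']
  · have heq : ∀ i, (a i)⁻¹ / S * a i = S⁻¹ := fun i ↦ by
      field_simp [(ha i).ne']
    simp only [heq, ciInf_const]
  · rintro _ ⟨w, hw, rfl⟩
    exact iInf_mul_le_inv_sum_inv ha hw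

end Simplex

/-- Thresholding characteristic time:
`(T*(μ))⁻¹ = sup_{w ∈ Δ_K} min_i w_i (μ_i - τ)²/(2σ²) = (Σ_i 2σ²/(μ_i - τ)²)⁻¹`. -/
theorem stmt_13 (K : ℕ) [NeZero K] (σ2 τ : ℝ) (hσ2 : 0 < σ2)
    (μ : Fin K → ℝ) (hμ : ∀ i, μ i ≠ τ) :
    Tinv K σ2 (AltTh K τ) μ =
        sSup {y | ∃ w ∈ stdSimplex ℝ (Fin K), y = ⨅ i, w i * (μ i - τ) ^ 2 / (2 * σ2)} ∧
      Tinv K σ2 (AltTh K τ) μ = (∑ i, 2 * σ2 / (μ i - τ) ^ 2)⁻¹ := by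
  have hc : 0 < 2 * σ2 := by positivity
  have hinner : Tinv K σ2 (AltTh K τ) μ =
      sSup {y | ∃ w ∈ stdSimplex ℝ (Fin K), y = ⨅ i, w i * (μ i - τ) ^ 2 / (2 * σ2)} := by
    rw [Tinv]
    congr 1
    ext x
    exact exists_congr fun w ↦ and_congr_right fun hw ↦ by rw [sInf_cost_altTh hc hw.1]
  have ha : ∀ i, 0 < (μ i - τ) ^ 2 / (2 * σ2) := fun i ↦ by
    have := sub_ne_zero_of_ne (hμ i)
    positivity
  have hsup := (isGreatest_iInf_mul_stdSimplex ha).csSup_eq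
  simp only [← mul_div_assoc, inv_div] at hsup
  exact ⟨hinner, hinner.trans hsup⟩
end

section
/- Let B be a set of K-armed mean vectors all sharing the same correct answer, and suppose there exists b ∈ B such that inf_{ν ∈ B} inf_{λ ∈ Alt_b} Σ_i w_i(b)(ν_i - λ_i)²/(2σ²) ≥ inf_{λ ∈ Alt_b} Σ_i w_i(b)(b_i - λ_i)²/(2σ²), where w(b) = argmax_{w ∈ Δ_K} inf_{λ ∈ Alt_b} Σ_i w_i (b_i - λ_i)²/(2σ²). Then T̄*(B) = max_{μ ∈ B} T*(μ) = T*(b), and w̄*(B) = w(b). -/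
/-- `TbarInv K σ2 Alt B = (T̄*(B))⁻¹ = max_{w ∈ Δ_K} inf_{ν ∈ B} inf_{λ ∈ Alt ν}
Σ_i w_i (ν_i - λ_i)²/(2σ²)`. -/
noncomputable def TbarInv (K : ℕ) (σ2 : ℝ) (Alt : (Fin K → ℝ) → Set (Fin K → ℝ))
    (B : Set (Fin K → ℝ)) : ℝ :=
  sSup {y | ∃ w ∈ stdSimplex ℝ (Fin K), y =
    sInf {z | ∃ ν ∈ B, z =
      sInf {u | ∃ l ∈ Alt ν, u = ∑ i, w i * (ν i - l i) ^ 2 / (2 * σ2)}}}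

/-- If all instances in `B` share the same alternative set `Alt b` and there is `b ∈ B`
such that `inf_{ν ∈ B} inf_{λ ∈ Alt b} Σ_i w_i(b)(ν_i - λ_i)²/(2σ²) ≥
inf_{λ ∈ Alt b} Σ_i w_i(b)(b_i - λ_i)²/(2σ²)`, where `w(b)` is the maximizer for `b`, then
`T̄*(B) = max_{μ ∈ B} T*(μ) = T*(b)` (stated at the level of inverse times:
`T̄*(B)⁻¹ = T*(b)⁻¹` and `T*(b)⁻¹ ≤ T*(ν)⁻¹` for all `ν ∈ B`) and `w̄*(B) = w(b)`
(i.e. `w(b)` attains `T̄*(B)⁻¹`). -/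
theorem stmt_14 (K : ℕ) (σ2 : ℝ) (hσ2 : 0 < σ2)
    (Alt : (Fin K → ℝ) → Set (Fin K → ℝ))
    (B : Set (Fin K → ℝ)) (b : Fin K → ℝ) (hb : b ∈ B)
    (hsame : ∀ ν ∈ B, Alt ν = Alt b) (hAne : (Alt b).Nonempty)
    (w : Fin K → ℝ) (hw : w ∈ stdSimplex ℝ (Fin K))
    (hargmax : IsGreatest
      {y | ∃ w' ∈ stdSimplex ℝ (Fin K), y =
        sInf {z | ∃ l ∈ Alt b, z = ∑ i, w' i * (b i - l i) ^ 2 / (2 * σ2)}}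
      (sInf {z | ∃ l ∈ Alt b, z = ∑ i, w i * (b i - l i) ^ 2 / (2 * σ2)}))
    (hkey : ∀ ν ∈ B,
      sInf {z | ∃ l ∈ Alt b, z = ∑ i, w i * (b i - l i) ^ 2 / (2 * σ2)} ≤
        sInf {z | ∃ l ∈ Alt b, z = ∑ i, w i * (ν i - l i) ^ 2 / (2 * σ2)}) :
    TbarInv K σ2 Alt B = Tinv K σ2 Alt b ∧
    (∀ ν ∈ B, Tinv K σ2 Alt b ≤ Tinv K σ2 Alt ν) ∧
    sInf {z | ∃ ν ∈ B, z =
        sInf {u | ∃ l ∈ Alt ν, u = ∑ i, w i * (ν i - l i) ^ 2 / (2 * σ2)}} =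
      TbarInv K σ2 Alt B := by
  classical
  obtain ⟨l0, hl0⟩ := hAne
  set V := sInf {z | ∃ l ∈ Alt b, z = ∑ i, w i * (b i - l i) ^ 2 / (2 * σ2)} with hV
  -- nonnegativity of the sums
  have hterm : ∀ w' : Fin K → ℝ, w' ∈ stdSimplex ℝ (Fin K) → ∀ μ l : Fin K → ℝ,
      0 ≤ ∑ i, w' i * (μ i - l i) ^ 2 / (2 * σ2) := by
    intro w' hw' μ l
    apply Finset.sum_nonneg
    intro i _
    exact div_nonneg (mul_nonneg (hw'.1 i) (sq_nonneg _)) (by linarith)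
  -- inner sets
  have hSne : ∀ (w' μ : Fin K → ℝ),
      ({z | ∃ l ∈ Alt b, z = ∑ i, w' i * (μ i - l i) ^ 2 / (2 * σ2)}).Nonempty :=
    fun w' μ => ⟨_, l0, hl0, rfl⟩
  have hSbdd : ∀ w' : Fin K → ℝ, w' ∈ stdSimplex ℝ (Fin K) → ∀ μ : Fin K → ℝ,
      BddBelow {z | ∃ l ∈ Alt b, z = ∑ i, w' i * (μ i - l i) ^ 2 / (2 * σ2)} := by
    intro w' hw' μ
    exact ⟨0, fun z ⟨l, hl, hz⟩ => hz ▸ hterm w' hw' μ l⟩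
  have hSnonneg : ∀ w' : Fin K → ℝ, w' ∈ stdSimplex ℝ (Fin K) → ∀ μ : Fin K → ℝ,
      0 ≤ sInf {z | ∃ l ∈ Alt b, z = ∑ i, w' i * (μ i - l i) ^ 2 / (2 * σ2)} := by
    intro w' hw' μ
    exact le_csInf (hSne w' μ) (fun z ⟨l, hl, hz⟩ => hz ▸ hterm w' hw' μ l)
  -- upper bound at l0
  have hSle : ∀ w' : Fin K → ℝ, w' ∈ stdSimplex ℝ (Fin K) → ∀ μ : Fin K → ℝ,
      sInf {z | ∃ l ∈ Alt b, z = ∑ i, w' i * (μ i - l i) ^ 2 / (2 * σ2)} ≤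
        ∑ i, (μ i - l0 i) ^ 2 / (2 * σ2) := by
    intro w' hw' μ
    refine le_trans (csInf_le (hSbdd w' hw' μ) ⟨l0, hl0, rfl⟩) ?_
    apply Finset.sum_le_sum
    intro i _
    apply div_le_div_of_nonneg_right ?_ (by linarith)
    · nlinarith [hw'.1 i, sq_nonneg (μ i - l0 i),
        Finset.single_le_sum (f := w') (fun j _ => hw'.1 j) (Finset.mem_univ i), hw'.2]
  -- for any w', sInf f(w',b) ≤ V
  have hVub : ∀ w' : Fin K → ℝ, w' ∈ stdSimplex ℝ (Fin K) →
      sInf {z | ∃ l ∈ Alt b, z = ∑ i, w' i * (b i - l i) ^ 2 / (2 * σ2)} ≤ V :=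
    fun w' hw' => hargmax.2 ⟨w', hw', rfl⟩
  -- rewrite middle sets using hsame
  have hmid : ∀ w' : Fin K → ℝ,
      {z | ∃ ν ∈ B, z = sInf {u | ∃ l ∈ Alt ν, u = ∑ i, w' i * (ν i - l i) ^ 2 / (2 * σ2)}} =
      {z | ∃ ν ∈ B, z = sInf {u | ∃ l ∈ Alt b, u = ∑ i, w' i * (ν i - l i) ^ 2 / (2 * σ2)}} := by
    intro w'
    ext z
    constructor
    · rintro ⟨ν, hν, rfl⟩; exact ⟨ν, hν, by rw [hsame ν hν]⟩
    · rintro ⟨ν, hν, rfl⟩; exact ⟨ν, hν, by rw [hsame ν hν]⟩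
  -- g(w) = V
  have hgw : sInf {z | ∃ ν ∈ B, z =
      sInf {u | ∃ l ∈ Alt ν, u = ∑ i, w i * (ν i - l i) ^ 2 / (2 * σ2)}} = V := by
    rw [hmid w]
    apply le_antisymm
    · exact csInf_le ⟨V, fun z ⟨ν, hν, hz⟩ => hz ▸ hkey ν hν⟩ ⟨b, hb, rfl⟩
    · exact le_csInf ⟨_, b, hb, rfl⟩ (fun z ⟨ν, hν, hz⟩ => hz ▸ hkey ν hν)
  -- for any w', g(w') ≤ V
  have hgub : ∀ w' : Fin K → ℝ, w' ∈ stdSimplex ℝ (Fin K) →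
      sInf {z | ∃ ν ∈ B, z =
        sInf {u | ∃ l ∈ Alt ν, u = ∑ i, w' i * (ν i - l i) ^ 2 / (2 * σ2)}} ≤ V := by
    intro w' hw'
    rw [hmid w']
    refine le_trans (csInf_le ?_ ⟨b, hb, rfl⟩) (hVub w' hw')
    exact ⟨0, fun z ⟨ν, hν, hz⟩ => hz ▸ hSnonneg w' hw' ν⟩
  -- TbarInv = V
  have hTbar : TbarInv K σ2 Alt B = V := by
    refine IsGreatest.csSup_eq ⟨⟨w, hw, hgw.symm⟩, ?_⟩
    rintro y ⟨w', hw', rfl⟩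
    exact hgub w' hw'
  have hTb : Tinv K σ2 Alt b = V := hargmax.csSup_eq
  refine ⟨hTbar.trans hTb.symm, ?_, hgw.trans hTbar.symm⟩
  intro ν hν
  rw [hTb]
  have hbdd : BddAbove {x | ∃ w' ∈ stdSimplex ℝ (Fin K), x =
      sInf {y | ∃ l ∈ Alt ν, y = ∑ i, w' i * (ν i - l i) ^ 2 / (2 * σ2)}} := by
    refine ⟨∑ i, (ν i - l0 i) ^ 2 / (2 * σ2), ?_⟩
    rintro x ⟨w', hw', rfl⟩
    rw [hsame ν hν]
    exact hSle w' hw' ν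
  refine le_trans ?_ (le_csSup hbdd ⟨w, hw, rfl⟩)
  rw [hsame ν hν]
  exact hkey ν hν
end

section
/- In the thresholding bandit problem with threshold τ, let μ satisfy min_i |μ_i - τ| > ε for some ε ≥ 0, and define b by b_i = μ_i - ε if μ_i > τ and b_i = μ_i + ε if μ_i < τ. Then T̄*(B_∞(μ, ε)) = max_{ν ∈ B_∞(μ, ε)} T*(ν) = T*(b). -/
/-! ### Auxiliary definitions and lemmas -/

/-- The set whose infimum is the inner infimum in `Tinv`. -/
def Sset (K : ℕ) (σ2 τ : ℝ) (ν w : Fin K → ℝ) : Set ℝ :=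
  {y | ∃ l ∈ AltTh K τ ν, y = ∑ i, w i * (ν i - l i) ^ 2 / (2 * σ2)}

lemma alt_flip {K : ℕ} {τ : ℝ} {ν l : Fin K → ℝ} (hl : l ∈ AltTh K τ ν) :
    ∃ i, ((τ < l i) ↔ ¬ (τ < ν i)) := by
  by_contra h
  push_neg at h
  apply hl
  ext i
  have := h i
  simp only [Set.mem_setOf_eq]
  rcases this with ⟨h1, h2⟩ | ⟨h1, h2⟩
  · exact iff_of_true h1 h2
  · exact iff_of_false (not_lt.2 h1) (not_lt.2 h2)

lemma update_mem_alt {K : ℕ} {τ : ℝ} {ν : Fin K → ℝ} {i : Fin K} {x : ℝ}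
    (hx : (τ < x) ↔ ¬ (τ < ν i)) : Function.update ν i x ∈ AltTh K τ ν := by
  intro h
  have hi := Set.ext_iff.mp h i
  simp only [Set.mem_setOf_eq, Function.update_self] at hi
  tauto

lemma sum_update {K : ℕ} (σ2 : ℝ) (w ν : Fin K → ℝ) (i : Fin K) (x : ℝ) :
    ∑ j, w j * (ν j - Function.update ν i x j) ^ 2 / (2 * σ2)
      = w i * (ν i - x) ^ 2 / (2 * σ2) := by
  rw [Finset.sum_eq_single i]
  · rw [Function.update_self]
  · intro j _ hj
    rw [Function.update_of_ne hj]
    simp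
  · simp

lemma elem_nonneg {K : ℕ} {σ2 : ℝ} (hσ2 : 0 < σ2) {w : Fin K → ℝ}
    (hw : ∀ i, 0 ≤ w i) (ν l : Fin K → ℝ) :
    0 ≤ ∑ j, w j * (ν j - l j) ^ 2 / (2 * σ2) :=
  Finset.sum_nonneg fun j _ => div_nonneg (mul_nonneg (hw j) (sq_nonneg _)) (by linarith)

lemma bddBelow_Sset {K : ℕ} {σ2 τ : ℝ} (hσ2 : 0 < σ2) {w : Fin K → ℝ}
    (hw : ∀ i, 0 ≤ w i) (ν : Fin K → ℝ) : BddBelow (Sset K σ2 τ ν w) := by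
  refine ⟨0, ?_⟩
  rintro u ⟨l, hl, rfl⟩
  exact elem_nonneg hσ2 hw ν l

lemma sset_nonneg {K : ℕ} {σ2 τ : ℝ} (hσ2 : 0 < σ2) {w : Fin K → ℝ}
    (hw : ∀ i, 0 ≤ w i) (ν : Fin K → ℝ) : ∀ u ∈ Sset K σ2 τ ν w, 0 ≤ u := by
  rintro u ⟨l, hl, rfl⟩
  exact elem_nonneg hσ2 hw ν l

lemma sset_nonempty {K : ℕ} {σ2 τ : ℝ} (hK : 0 < K) (w ν : Fin K → ℝ) :
    (Sset K σ2 τ ν w).Nonempty := by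
  set i0 : Fin K := ⟨0, hK⟩
  set x : ℝ := if τ < ν i0 then τ else τ + 1 with hx
  have hflip : (τ < x) ↔ ¬ (τ < ν i0) := by
    by_cases h : τ < ν i0 <;> simp [hx, h]
  exact ⟨_, ⟨Function.update ν i0 x, update_mem_alt hflip, rfl⟩⟩

lemma w_le_one {K : ℕ} {w : Fin K → ℝ} (hw : w ∈ stdSimplex ℝ (Fin K)) (i : Fin K) :
    w i ≤ 1 := by
  have := Finset.single_le_sum (fun j _ => hw.1 j) (Finset.mem_univ i)
  rw [hw.2] at this
  exact this

/-- The inner infimum at `ν` is at most `w i (ν i - τ)² / (2 σ²)` for any arm `i`. -/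
lemma sInf_le_target {K : ℕ} {σ2 τ : ℝ} (hσ2 : 0 < σ2) {w : Fin K → ℝ}
    (hw : w ∈ stdSimplex ℝ (Fin K)) {ν : Fin K → ℝ} (i : Fin K) (hν : ν i ≠ τ) :
    sInf (Sset K σ2 τ ν w) ≤ w i * (ν i - τ) ^ 2 / (2 * σ2) := by
  have hbdd := bddBelow_Sset hσ2 hw.1 ν (τ := τ)
  rcases lt_or_gt_of_ne hν with hlt | hgt
  · -- ν i < τ : approximate by crossing slightly above τ
    refine le_of_forall_pos_le_add fun η hη => ?_
    set c : ℝ := τ - ν i with hc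
    have hc0 : 0 < c := by linarith
    set δ : ℝ := min 1 (2 * σ2 * η / (2 * c + 1)) with hδdef
    have hδ0 : 0 < δ := lt_min one_pos (by positivity)
    have hδ1 : δ ≤ 1 := min_le_left _ _
    have hδ2 : δ ≤ 2 * σ2 * η / (2 * c + 1) := min_le_right _ _
    have hkey : δ * (2 * c + 1) ≤ 2 * σ2 * η := by
      rw [← le_div_iff₀ (by linarith : (0:ℝ) < 2 * c + 1)]
      exact hδ2
    have hflip : (τ < τ + δ) ↔ ¬ (τ < ν i) := by
      constructor
      · intro _; linarith
      · intro _; linarith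
    have hmem : (w i * (ν i - (τ + δ)) ^ 2 / (2 * σ2)) ∈ Sset K σ2 τ ν w :=
      ⟨Function.update ν i (τ + δ), update_mem_alt hflip, (sum_update σ2 w ν i (τ + δ)).symm⟩
    have h1 : sInf (Sset K σ2 τ ν w) ≤ w i * (ν i - (τ + δ)) ^ 2 / (2 * σ2) :=
      csInf_le hbdd hmem
    have hwi0 : 0 ≤ w i := hw.1 i
    have hwi1 : w i ≤ 1 := w_le_one hw i
    have hA : w i * (ν i - (τ + δ)) ^ 2 ≤ w i * (ν i - τ) ^ 2 + 2 * σ2 * η := by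
      have e1 : (ν i - (τ + δ)) ^ 2 = (c + δ) ^ 2 := by rw [hc]; ring
      have e2 : (ν i - τ) ^ 2 = c ^ 2 := by rw [hc]; ring
      rw [e1, e2]
      have h7 : 0 ≤ (1 - w i) * (2 * c * δ + δ ^ 2) :=
        mul_nonneg (sub_nonneg.2 hwi1) (by positivity)
      have h8 : δ * δ ≤ δ * 1 := mul_le_mul_of_nonneg_left hδ1 hδ0.le
      nlinarith [h7, h8, hkey]
    have h2 : w i * (ν i - (τ + δ)) ^ 2 / (2 * σ2)
        ≤ (w i * (ν i - τ) ^ 2 + 2 * σ2 * η) / (2 * σ2) := by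
      apply div_le_div_of_nonneg_right hA -- may need name fix
      linarith
    have h3 : (w i * (ν i - τ) ^ 2 + 2 * σ2 * η) / (2 * σ2)
        = w i * (ν i - τ) ^ 2 / (2 * σ2) + η := by
      field_simp
    linarith
  · -- τ < ν i : exact crossing at τ
    have hflip : (τ < τ) ↔ ¬ (τ < ν i) := by simp [hgt]
    exact csInf_le hbdd
      ⟨Function.update ν i τ, update_mem_alt hflip, (sum_update σ2 w ν i τ).symm⟩

/-- Scalar comparison lemma for a flipped arm. -/
lemma key_sq {ε τ m v l' b' : ℝ} (hm : ε < |m - τ|)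
    (hb : b' = if τ < m then m - ε else m + ε)
    (hv : |v - m| ≤ ε) (hflip : (τ < l') ↔ ¬ (τ < v)) :
    b' ≠ τ ∧ (b' - τ) ^ 2 ≤ (v - l') ^ 2 := by
  rw [abs_le] at hv
  rcases lt_or_ge τ m with h | h
  · rw [abs_of_pos (by linarith : (0:ℝ) < m - τ)] at hm
    rw [if_pos h] at hb
    have hvτ : τ < v := by linarith [hv.1]
    have hlτ : l' ≤ τ := not_lt.1 (fun hc => (hflip.1 hc) hvτ)
    constructor
    · intro hbt; rw [hbt] at hb; linarith
    · nlinarith [hv.1]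
  · rw [abs_of_nonpos (by linarith : m - τ ≤ 0)] at hm
    rw [if_neg (not_lt.2 h)] at hb
    have hvτ : ¬ (τ < v) := by intro hc; linarith [hv.2]
    have hlτ : τ < l' := hflip.2 hvτ
    constructor
    · intro hbt; rw [hbt] at hb; linarith
    · nlinarith [hv.2]

section main

variable {K : ℕ} {σ2 τ ε : ℝ} {μ b : Fin K → ℝ}

/-- Key claim: the inner infimum at `b` is below the inner infimum at any `ν` in the ball. -/
lemma sInf_b_le (hσ2 : 0 < σ2) (hμ : ∀ i, ε < |μ i - τ|)
    (hbdef : ∀ i, b i = if τ < μ i then μ i - ε else μ i + ε)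
    {w : Fin K → ℝ} (hw : w ∈ stdSimplex ℝ (Fin K))
    {ν : Fin K → ℝ} (hν : ν ∈ Metric.closedBall μ ε) :
    sInf (Sset K σ2 τ b w) ≤ sInf (Sset K σ2 τ ν w) := by
  rcases Nat.eq_zero_or_pos K with hK | hK
  · subst hK
    have : Sset 0 σ2 τ b w = Sset 0 σ2 τ ν w := by
      have hbν : b = ν := funext fun i => absurd i.2 (by simp)
      rw [hbν]
    rw [this]
  refine le_csInf (sset_nonempty hK w ν) ?_
  rintro u ⟨l, hl, rfl⟩
  obtain ⟨i, hflip⟩ := alt_flip hl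
  have hvi : |ν i - μ i| ≤ ε := by
    have h1 := dist_le_pi_dist ν μ i
    rw [Metric.mem_closedBall] at hν
    rw [Real.dist_eq] at h1
    linarith
  obtain ⟨hbne, hsq⟩ := key_sq (hμ i) (hbdef i) hvi hflip
  calc sInf (Sset K σ2 τ b w) ≤ w i * (b i - τ) ^ 2 / (2 * σ2) :=
        sInf_le_target hσ2 hw i hbne
    _ ≤ w i * (ν i - l i) ^ 2 / (2 * σ2) := by gcongr; exact hw.1 i
    _ ≤ ∑ j, w j * (ν j - l j) ^ 2 / (2 * σ2) :=
        Finset.single_le_sum (f := fun j => w j * (ν j - l j) ^ 2 / (2 * σ2))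
          (fun j _ => div_nonneg (mul_nonneg (hw.1 j) (sq_nonneg _)) (by linarith))
          (Finset.mem_univ i)

end main

/-- Thresholding: if `min_i |μ_i - τ| > ε` and `b_i = μ_i - ε` when `μ_i > τ`,
`b_i = μ_i + ε` when `μ_i < τ`, then
`T̄*(B_∞(μ, ε)) = max_{ν ∈ B_∞(μ, ε)} T*(ν) = T*(b)` (stated at the level of inverse
times, `B_∞(μ, ε)` being the sup-norm closed ball of radius `ε`). -/
theorem stmt_15 (K : ℕ) (σ2 τ ε : ℝ) (hσ2 : 0 < σ2) (hε : 0 ≤ ε)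
    (μ : Fin K → ℝ) (hμ : ∀ i, ε < |μ i - τ|)
    (b : Fin K → ℝ) (hbdef : ∀ i, b i = if τ < μ i then μ i - ε else μ i + ε) :
    b ∈ Metric.closedBall μ ε ∧
    TbarInv K σ2 (AltTh K τ) (Metric.closedBall μ ε) = Tinv K σ2 (AltTh K τ) b ∧
    (∀ ν ∈ Metric.closedBall μ ε, Tinv K σ2 (AltTh K τ) b ≤ Tinv K σ2 (AltTh K τ) ν) := by
  have hbB : b ∈ Metric.closedBall μ ε := by
    rw [Metric.mem_closedBall, dist_pi_le_iff hε]
    intro i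
    rw [Real.dist_eq, hbdef i]
    split <;> (rw [abs_le]; exact ⟨by linarith, by linarith⟩)
  have hTinv : ∀ ν : Fin K → ℝ, Tinv K σ2 (AltTh K τ) ν
      = sSup {x | ∃ w ∈ stdSimplex ℝ (Fin K), x = sInf (Sset K σ2 τ ν w)} := fun ν => rfl
  have hTbar : TbarInv K σ2 (AltTh K τ) (Metric.closedBall μ ε)
      = sSup {y | ∃ w ∈ stdSimplex ℝ (Fin K), y =
          sInf {z | ∃ ν ∈ Metric.closedBall μ ε, z = sInf (Sset K σ2 τ ν w)}} := rfl
  have hkeyw : ∀ w ∈ stdSimplex ℝ (Fin K),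
      sInf {z | ∃ ν ∈ Metric.closedBall μ ε, z = sInf (Sset K σ2 τ ν w)}
        = sInf (Sset K σ2 τ b w) := by
    intro w hw
    have hlow : ∀ z ∈ {z | ∃ ν ∈ Metric.closedBall μ ε, z = sInf (Sset K σ2 τ ν w)},
        sInf (Sset K σ2 τ b w) ≤ z := by
      rintro z ⟨ν, hν, rfl⟩
      exact sInf_b_le hσ2 hμ hbdef hw hν
    have hmem : sInf (Sset K σ2 τ b w)
        ∈ {z | ∃ ν ∈ Metric.closedBall μ ε, z = sInf (Sset K σ2 τ ν w)} := ⟨b, hbB, rfl⟩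
    exact le_antisymm (csInf_le ⟨_, hlow⟩ hmem) (le_csInf ⟨_, hmem⟩ hlow)
  refine ⟨hbB, ?_, ?_⟩
  · rw [hTbar, hTinv]
    congr 1
    ext y
    constructor
    · rintro ⟨w, hw, rfl⟩
      exact ⟨w, hw, hkeyw w hw⟩
    · rintro ⟨w, hw, rfl⟩
      exact ⟨w, hw, (hkeyw w hw).symm⟩
  · intro ν hν
    rw [hTinv, hTinv]
    rcases Nat.eq_zero_or_pos K with hK | hK
    · subst hK
      have hbν : b = ν := funext fun i => absurd i.2 (by simp)
      rw [hbν]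
    -- BddAbove for the ν-set
    set i0 : Fin K := ⟨0, hK⟩
    set x0 : ℝ := if τ < ν i0 then τ else τ + 1 with hx0
    have hflip : (τ < x0) ↔ ¬ (τ < ν i0) := by
      by_cases h : τ < ν i0 <;> simp [hx0, h]
    have hbddA : BddAbove {x | ∃ w ∈ stdSimplex ℝ (Fin K), x = sInf (Sset K σ2 τ ν w)} := by
      refine ⟨(ν i0 - x0) ^ 2 / (2 * σ2), ?_⟩
      rintro x ⟨w, hw, rfl⟩
      have hmem : (w i0 * (ν i0 - x0) ^ 2 / (2 * σ2)) ∈ Sset K σ2 τ ν w :=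
        ⟨Function.update ν i0 x0, update_mem_alt hflip, (sum_update σ2 w ν i0 x0).symm⟩
      calc sInf (Sset K σ2 τ ν w) ≤ w i0 * (ν i0 - x0) ^ 2 / (2 * σ2) :=
            csInf_le (bddBelow_Sset hσ2 hw.1 ν) hmem
        _ ≤ 1 * (ν i0 - x0) ^ 2 / (2 * σ2) := by gcongr; exact w_le_one hw i0
        _ = (ν i0 - x0) ^ 2 / (2 * σ2) := by ring
    have hsupnn : 0 ≤ sSup {x | ∃ w ∈ stdSimplex ℝ (Fin K), x = sInf (Sset K σ2 τ ν w)} := by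
      apply Real.sSup_nonneg
      rintro x ⟨w, hw, rfl⟩
      exact le_csInf (sset_nonempty hK w ν) (sset_nonneg hσ2 hw.1 ν)
    apply Real.sSup_le _ hsupnn
    rintro x ⟨w, hw, rfl⟩
    calc sInf (Sset K σ2 τ b w) ≤ sInf (Sset K σ2 τ ν w) := sInf_b_le hσ2 hμ hbdef hw hν
      _ ≤ _ := le_csSup hbddA ⟨w, hw, rfl⟩
end

section
/- In the top-k problem, let μ be a mean vector with ordered means μ_1 ≥ … ≥ μ_K and μ_k - μ_{k+1} > 2ε, and define b by b_i = μ_i - ε for i ≤ k and b_i = μ_i + ε for i ≥ k+1. Then for every ν' ∈ B_∞(μ, ε), inf_{λ ∈ Alt_b} Σ_i w_i(b)(ν'_i - λ_i)²/(2σ²) ≥ inf_{λ ∈ Alt_b} Σ_i w_i(b)(b_i - λ_i)²/(2σ²), and consequently T̄*(B_∞(μ, ε)) = max_{ν ∈ B_∞(μ, ε)} T*(ν) = T*(b). -/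
lemma ncard_lt_k (K k : ℕ) (hkK : k ≤ K) : ({j : Fin K | (j : ℕ) < k}).ncard = k := by
  have hrange : Set.range (Fin.castLE hkK) = {j : Fin K | (j : ℕ) < k} := by
    ext j
    simp only [Set.mem_range, Set.mem_setOf_eq]
    constructor
    · rintro ⟨i, rfl⟩; simpa using i.isLt
    · intro hj; exact ⟨⟨j, hj⟩, by ext; simp⟩
  rw [← hrange, ← Nat.card_coe_set_eq,
    Nat.card_range_of_injective (Fin.castLE_injective hkK)]
  simp

lemma topSet_eq_of_sep {K k : ℕ} (hkK : k ≤ K) (x : Fin K → ℝ)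
    (h : ∀ a c : Fin K, (a : ℕ) < k → k ≤ (c : ℕ) → x c < x a) :
    topSet K k x = {i : Fin K | (i : ℕ) < k} := by
  ext i
  simp only [topSet, Set.mem_setOf_eq]
  constructor
  · intro hi
    by_contra hik
    push_neg at hik
    have hsub : {j : Fin K | (j : ℕ) < k} ⊆ {j : Fin K | x i < x j} :=
      fun j hj => h j i hj hik
    have : k ≤ ({j : Fin K | x i < x j}).ncard := by
      calc k = ({j : Fin K | (j : ℕ) < k}).ncard := (ncard_lt_k K k hkK).symm
        _ ≤ _ := Set.ncard_le_ncard hsub (Set.toFinite _)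
    omega
  · intro hik
    have hsub : {j : Fin K | x i < x j} ⊆ {j : Fin K | (j : ℕ) < k} \ {i} := by
      intro j hj
      simp only [Set.mem_setOf_eq] at hj
      constructor
      · by_contra hjk
        simp only [Set.mem_setOf_eq] at hjk
        push_neg at hjk
        exact absurd hj (not_lt.mpr (h i j hik hjk).le)
      · simp only [Set.mem_singleton_iff]
        rintro rfl; exact lt_irrefl _ hj
    have hss : {j : Fin K | (j : ℕ) < k} \ {i} ⊂ {j : Fin K | (j : ℕ) < k} := by
      constructor
      · exact Set.diff_subset
      · intro hcon
        exact (hcon hik).2 rfl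
    calc ({j : Fin K | x i < x j}).ncard
        ≤ ({j : Fin K | (j : ℕ) < k} \ {i}).ncard := Set.ncard_le_ncard hsub (Set.toFinite _)
      _ < ({j : Fin K | (j : ℕ) < k}).ncard := Set.ncard_lt_ncard hss (Set.toFinite _)
      _ = k := ncard_lt_k K k hkK

lemma topSet_ne_of_le {K k : ℕ} (x : Fin K → ℝ) (a c : Fin K)
    (ha : (a : ℕ) < k) (hc : k ≤ (c : ℕ)) (hle : x a ≤ x c) :
    topSet K k x ≠ {i : Fin K | (i : ℕ) < k} := by
  intro hEq
  have haT : ({j : Fin K | x a < x j}).ncard < k := by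
    have : a ∈ topSet K k x := hEq ▸ ha
    exact this
  have hcT : ¬ ({j : Fin K | x c < x j}).ncard < k := by
    intro hmem
    have : c ∈ ({i : Fin K | (i : ℕ) < k}) := hEq ▸ (hmem : c ∈ topSet K k x)
    exact absurd this (by simpa using not_lt.mpr hc)
  have hsub : {j : Fin K | x c < x j} ⊆ {j : Fin K | x a < x j} :=
    fun j hj => lt_of_le_of_lt hle hj
  exact hcT (lt_of_le_of_lt (Set.ncard_le_ncard hsub (Set.toFinite _)) haT)

/-- Top-`k`: with ordered means, gap `μ_k - μ_{k+1} > 2ε`, and `b` obtained by moving the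
top arms down by `ε` and the bottom arms up by `ε`, for every `ν' ∈ B_∞(μ, ε)` the value
`inf_{λ ∈ Alt b} Σ_i w_i(b)(ν'_i - λ_i)²/(2σ²)` is at least its value at `b`, and
consequently `T̄*(B_∞(μ, ε)) = max_{ν ∈ B_∞(μ, ε)} T*(ν) = T*(b)` (stated at the level
of inverse times). `w = w(b)` is the maximizer for instance `b`. -/
theorem stmt_16 (K k : ℕ) (σ2 ε : ℝ) (hσ2 : 0 < σ2) (hε : 0 ≤ ε)
    (hk : 0 < k) (hkK : k < K)
    (μ : Fin K → ℝ) (hord : ∀ i j : Fin K, i ≤ j → μ j ≤ μ i)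
    (hgap : μ ⟨k, hkK⟩ + 2 * ε < μ ⟨k - 1, by omega⟩)
    (b : Fin K → ℝ) (hbdef : ∀ i : Fin K, b i = if (i : ℕ) < k then μ i - ε else μ i + ε)
    (w : Fin K → ℝ) (hw : w ∈ stdSimplex ℝ (Fin K))
    (hargmax : IsGreatest
      {y | ∃ w' ∈ stdSimplex ℝ (Fin K), y =
        sInf {z | ∃ l ∈ AltTopK K k b, z = ∑ i, w' i * (b i - l i) ^ 2 / (2 * σ2)}}
      (sInf {z | ∃ l ∈ AltTopK K k b, z = ∑ i, w i * (b i - l i) ^ 2 / (2 * σ2)})) :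
    (∀ ν' ∈ Metric.closedBall μ ε,
      sInf {z | ∃ l ∈ AltTopK K k b, z = ∑ i, w i * (b i - l i) ^ 2 / (2 * σ2)} ≤
        sInf {z | ∃ l ∈ AltTopK K k b, z = ∑ i, w i * (ν' i - l i) ^ 2 / (2 * σ2)}) ∧
    TbarInv K σ2 (AltTopK K k) (Metric.closedBall μ ε) = Tinv K σ2 (AltTopK K k) b ∧
    (∀ ν ∈ Metric.closedBall μ ε,
      Tinv K σ2 (AltTopK K k) b ≤ Tinv K σ2 (AltTopK K k) ν) := by
  have hK0 : 0 < K := hk.trans hkK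
  have h2σ2 : (0:ℝ) < 2 * σ2 := by linarith
  -- membership of the ball gives coordinatewise bounds
  have hball : ∀ ν ∈ Metric.closedBall μ ε, ∀ i, |ν i - μ i| ≤ ε := by
    intro ν hν i
    have h := (dist_pi_le_iff hε).mp (Metric.mem_closedBall.mp hν) i
    rwa [Real.dist_eq] at h
  have hbball : b ∈ Metric.closedBall μ ε := by
    rw [Metric.mem_closedBall]
    refine (dist_pi_le_iff hε).mpr fun i => ?_
    rw [Real.dist_eq, hbdef i]
    split <;> simp [abs_le] <;> linarith
  -- separation for elements of the ball
  have hsep : ∀ ν ∈ Metric.closedBall μ ε, ∀ a c : Fin K,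
      (a : ℕ) < k → k ≤ (c : ℕ) → ν c < ν a := by
    intro ν hν a c ha hc
    have h1 := abs_le.mp (hball ν hν a)
    have h2 := abs_le.mp (hball ν hν c)
    have hma : μ ⟨k - 1, by omega⟩ ≤ μ a := hord a ⟨k - 1, by omega⟩ (by
      simp only [Fin.le_def]; omega)
    have hmc : μ c ≤ μ ⟨k, hkK⟩ := hord ⟨k, hkK⟩ c (by simp only [Fin.le_def]; exact hc)
    linarith
  have htopb : topSet K k b = {i : Fin K | (i : ℕ) < k} :=
    topSet_eq_of_sep hkK.le b (hsep b hbball)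
  have hAlt : ∀ ν ∈ Metric.closedBall μ ε, AltTopK K k ν = AltTopK K k b := by
    intro ν hν
    have := topSet_eq_of_sep hkK.le ν (hsep ν hν)
    unfold AltTopK
    rw [this, htopb]
  -- zero vector is an alternative
  have hZero : (0 : Fin K → ℝ) ∈ AltTopK K k b := by
    show topSet K k 0 ≠ topSet K k b
    rw [htopb]
    exact topSet_ne_of_le _ ⟨0, hK0⟩ ⟨k, hkK⟩ hk (le_refl k) (le_refl _)
  -- the generic cost set for weight w' and instance x (alternatives of b)
  have hnonemp : ∀ (w' x : Fin K → ℝ),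
      {z | ∃ l ∈ AltTopK K k b, z = ∑ i, w' i * (x i - l i) ^ 2 / (2 * σ2)}.Nonempty :=
    fun w' x => ⟨_, 0, hZero, rfl⟩
  have hbdd : ∀ w' ∈ stdSimplex ℝ (Fin K), ∀ x : Fin K → ℝ,
      ∀ z ∈ {z | ∃ l ∈ AltTopK K k b, z = ∑ i, w' i * (x i - l i) ^ 2 / (2 * σ2)},
      (0:ℝ) ≤ z := by
    rintro w' hw' x z ⟨l, hl, rfl⟩
    refine Finset.sum_nonneg fun i _ => div_nonneg (mul_nonneg (hw'.1 i) (sq_nonneg _)) h2σ2.le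
  have hbddBelow : ∀ w' ∈ stdSimplex ℝ (Fin K), ∀ x : Fin K → ℝ,
      BddBelow {z | ∃ l ∈ AltTopK K k b, z = ∑ i, w' i * (x i - l i) ^ 2 / (2 * σ2)} :=
    fun w' hw' x => ⟨0, fun z hz => hbdd w' hw' x z hz⟩
  -- key inclusion: costs from ν are costs from b
  have hincl : ∀ (w' : Fin K → ℝ), ∀ ν ∈ Metric.closedBall μ ε,
      {z | ∃ l ∈ AltTopK K k b, z = ∑ i, w' i * (ν i - l i) ^ 2 / (2 * σ2)} ⊆
      {z | ∃ l ∈ AltTopK K k b, z = ∑ i, w' i * (b i - l i) ^ 2 / (2 * σ2)} := by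
    rintro w' ν hν z ⟨l, hl, rfl⟩
    obtain ⟨a, c, ha, hc, hle⟩ : ∃ a c : Fin K, (a : ℕ) < k ∧ k ≤ (c : ℕ) ∧ l a ≤ l c := by
      by_contra hcon
      push_neg at hcon
      exact hl ((topSet_eq_of_sep hkK.le l fun a c ha hc => hcon a c ha hc).trans htopb.symm)
    refine ⟨fun i => l i + b i - ν i, ?_, ?_⟩
    · show topSet K k _ ≠ topSet K k b
      rw [htopb]
      refine topSet_ne_of_le _ a c ha hc ?_
      have h1 := abs_le.mp (hball ν hν a)
      have h2 := abs_le.mp (hball ν hν c)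
      have hba : b a = μ a - ε := by rw [hbdef a]; simp [ha]
      have hbc : b c = μ c + ε := by rw [hbdef c]; simp [not_lt.mpr hc]
      show l a + b a - ν a ≤ l c + b c - ν c
      rw [hba, hbc]
      linarith
    · exact Finset.sum_congr rfl fun i _ => by ring_nf
  -- the pointwise inf comparison
  have hinfle : ∀ w' ∈ stdSimplex ℝ (Fin K), ∀ ν ∈ Metric.closedBall μ ε,
      sInf {z | ∃ l ∈ AltTopK K k b, z = ∑ i, w' i * (b i - l i) ^ 2 / (2 * σ2)} ≤
      sInf {z | ∃ l ∈ AltTopK K k b, z = ∑ i, w' i * (ν i - l i) ^ 2 / (2 * σ2)} :=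
    fun w' hw' ν hν =>
      csInf_le_csInf (hbddBelow w' hw' b) (hnonemp w' ν) (hincl w' ν hν)
  -- upper bound on each inner inf
  have hub : ∀ w' ∈ stdSimplex ℝ (Fin K), ∀ x : Fin K → ℝ,
      sInf {z | ∃ l ∈ AltTopK K k b, z = ∑ i, w' i * (x i - l i) ^ 2 / (2 * σ2)} ≤
      ∑ i, (x i) ^ 2 / (2 * σ2) := by
    intro w' hw' x
    have hmem : (∑ i, w' i * (x i - 0) ^ 2 / (2 * σ2)) ∈
        {z | ∃ l ∈ AltTopK K k b, z = ∑ i, w' i * (x i - l i) ^ 2 / (2 * σ2)} :=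
      ⟨0, hZero, rfl⟩
    refine le_trans (csInf_le (hbddBelow w' hw' x) hmem) ?_
    refine Finset.sum_le_sum fun i _ => ?_
    rw [sub_zero]
    have hle1 : w' i ≤ 1 := by
      have := Finset.single_le_sum (f := w') (fun j _ => hw'.1 j) (Finset.mem_univ i)
      rwa [hw'.2] at this
    have : w' i * (x i) ^ 2 ≤ (x i) ^ 2 := by nlinarith [sq_nonneg (x i), hw'.1 i]
    exact (div_le_div_iff_of_pos_right h2σ2).mpr this
  refine ⟨fun ν' hν' => hinfle w hw ν' hν', ?_, ?_⟩
  · -- TbarInv = Tinv b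
    unfold TbarInv Tinv
    congr 1
    ext y
    constructor
    · rintro ⟨w', hw', rfl⟩
      refine ⟨w', hw', ?_⟩
      -- inner: sInf over ν ∈ ball equals value at b
      have hsetz : {z | ∃ ν ∈ Metric.closedBall μ ε, z =
          sInf {u | ∃ l ∈ AltTopK K k ν, u = ∑ i, w' i * (ν i - l i) ^ 2 / (2 * σ2)}} =
          {z | ∃ ν ∈ Metric.closedBall μ ε, z =
          sInf {u | ∃ l ∈ AltTopK K k b, u = ∑ i, w' i * (ν i - l i) ^ 2 / (2 * σ2)}} := by
        ext z
        constructor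
        · rintro ⟨ν, hν, rfl⟩; exact ⟨ν, hν, by rw [hAlt ν hν]⟩
        · rintro ⟨ν, hν, rfl⟩; exact ⟨ν, hν, by rw [hAlt ν hν]⟩
      rw [hsetz]
      refine le_antisymm ?_ ?_
      · refine csInf_le ⟨0, ?_⟩ ⟨b, hbball, rfl⟩
        rintro z ⟨ν, hν, rfl⟩
        exact le_csInf (hnonemp w' ν) (fun y hy => hbdd w' hw' ν y hy)
      · refine le_csInf ⟨_, b, hbball, rfl⟩ ?_
        rintro z ⟨ν, hν, rfl⟩
        exact hinfle w' hw' ν hν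
    · rintro ⟨w', hw', rfl⟩
      refine ⟨w', hw', ?_⟩
      have hsetz : {z | ∃ ν ∈ Metric.closedBall μ ε, z =
          sInf {u | ∃ l ∈ AltTopK K k ν, u = ∑ i, w' i * (ν i - l i) ^ 2 / (2 * σ2)}} =
          {z | ∃ ν ∈ Metric.closedBall μ ε, z =
          sInf {u | ∃ l ∈ AltTopK K k b, u = ∑ i, w' i * (ν i - l i) ^ 2 / (2 * σ2)}} := by
        ext z
        constructor
        · rintro ⟨ν, hν, rfl⟩; exact ⟨ν, hν, by rw [hAlt ν hν]⟩
        · rintro ⟨ν, hν, rfl⟩; exact ⟨ν, hν, by rw [hAlt ν hν]⟩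
      rw [hsetz]
      refine (le_antisymm ?_ ?_).symm
      · refine csInf_le ⟨0, ?_⟩ ⟨b, hbball, rfl⟩
        rintro z ⟨ν, hν, rfl⟩
        exact le_csInf (hnonemp w' ν) (fun y hy => hbdd w' hw' ν y hy)
      · refine le_csInf ⟨_, b, hbball, rfl⟩ ?_
        rintro z ⟨ν, hν, rfl⟩
        exact hinfle w' hw' ν hν
  · -- monotonicity of Tinv
    intro ν hν
    unfold Tinv
    have hAltν := hAlt ν hν
    have hbddA : BddAbove {x | ∃ w' ∈ stdSimplex ℝ (Fin K), x =
        sInf {y | ∃ l ∈ AltTopK K k ν, y = ∑ i, w' i * (ν i - l i) ^ 2 / (2 * σ2)}} := by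
      refine ⟨∑ i, (ν i) ^ 2 / (2 * σ2), ?_⟩
      rintro x ⟨w', hw', rfl⟩
      rw [hAltν]
      exact hub w' hw' ν
    refine csSup_le ⟨_, w, hw, rfl⟩ ?_
    rintro x ⟨w', hw', rfl⟩
    refine le_trans (hinfle w' hw' ν hν) (le_csSup hbddA ⟨w', hw', ?_⟩)
    rw [hAltν]
end
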